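/- arXiv:1712.02949 — 3 statements merged into one kernel-verified Lean document; each statement's English description precedes it below -/
import Mathlib

section
/- For any real p ∈ [0,1] and integers 0 ≤ k ≤ n, the binomial tail satisfies ∑_{i=k}^{n} C(n,i) p^i (1-p)^{n-i} ≤ C(n,k) p^k. -/
/-!
Writing `i = k + j`, the identity `C(n, i) C(i, k) = C(n, k) C(n - k, j)` gives
`C(n, k + j) ≤ C(n, k) C(n - k, j)`. Hence the tail is at most `C(n, k) p^k` times the full
binomial expansion of `(p + (1 - p))^(n - k) = 1`.
-/

open Finset

theorem Nat.choose_add_le_choose_mul_choose (n k j : ℕ) :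
    n.choose (k + j) ≤ n.choose k * (n - k).choose j :=
  calc n.choose (k + j) ≤ n.choose (k + j) * (k + j).choose k :=
        Nat.le_mul_of_pos_right _ (Nat.choose_pos (Nat.le_add_right k j))
    _ = n.choose k * (n - k).choose j := by
        rw [Nat.choose_mul (Nat.le_add_right k j), Nat.add_sub_cancel_left]

theorem sum_range_choose_mul_pow_mul_one_sub_pow {R : Type*} [CommRing R] (p : R) (m : ℕ) :
    ∑ j ∈ range (m + 1), (m.choose j : R) * p ^ j * (1 - p) ^ (m - j) = 1 :=
  calc ∑ j ∈ range (m + 1), (m.choose j : R) * p ^ j * (1 - p) ^ (m - j)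
      = ∑ j ∈ range (m + 1), p ^ j * (1 - p) ^ (m - j) * m.choose j :=
        sum_congr rfl fun j _ => by ring
    _ = (p + (1 - p)) ^ m := (add_pow p (1 - p) m).symm
    _ = 1 := by rw [add_sub_cancel, one_pow]

theorem choose_add_mul_pow_mul_pow_le {R : Type*} [CommSemiring R] [PartialOrder R]
    [IsOrderedRing R] {p q : R} (hp : 0 ≤ p) (hq : 0 ≤ q) (n k j : ℕ) :
    (n.choose (k + j) : R) * p ^ (k + j) * q ^ (n - (k + j))
      ≤ n.choose k * p ^ k * ((n - k).choose j * p ^ j * q ^ (n - k - j)) :=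
  calc (n.choose (k + j) : R) * p ^ (k + j) * q ^ (n - (k + j))
      ≤ (n.choose k * (n - k).choose j : ℕ) * p ^ (k + j) * q ^ (n - (k + j)) := by
        gcongr
        exact Nat.choose_add_le_choose_mul_choose n k j
    _ = n.choose k * p ^ k * ((n - k).choose j * p ^ j * q ^ (n - k - j)) := by
        rw [pow_add, Nat.sub_sub]; push_cast; ring

theorem binomial_tail_bound (p : ℝ) (hp0 : 0 ≤ p) (hp1 : p ≤ 1) (k n : ℕ) (hkn : k ≤ n) :
    ∑ i ∈ Finset.Icc k n, (n.choose i : ℝ) * p ^ i * (1 - p) ^ (n - i)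
      ≤ (n.choose k : ℝ) * p ^ k := by
  rw [← Ico_add_one_right_eq_Icc, sum_Ico_eq_sum_range, Nat.sub_add_comm hkn]
  calc ∑ j ∈ range (n - k + 1), (n.choose (k + j) : ℝ) * p ^ (k + j) * (1 - p) ^ (n - (k + j))
      ≤ ∑ j ∈ range (n - k + 1),
          (n.choose k : ℝ) * p ^ k * ((n - k).choose j * p ^ j * (1 - p) ^ (n - k - j)) :=
        sum_le_sum fun j _ => choose_add_mul_pow_mul_pow_le hp0 (sub_nonneg.2 hp1) n k j
    _ = n.choose k * p ^ k := by
        rw [← mul_sum, sum_range_choose_mul_pow_mul_one_sub_pow, mul_one]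
end

section
/- In the Radon urn game with n balls, r red balls, and sample size t, define P(r) as the probability that a sample of t balls (with replacement) contains at least two red balls, P₊(r) = P(r)(1 - r/n) the probability of a red increase, and P₋(r) = (1 - P(r))(r/n) the probability of a red decrease. Let ε ∈ (0, 1/4). If r ≤ (1 - 2ε) n / t², then P₊(r) ≤ ((1/2 - ε)/(1/2 + ε)) · P₋(r). -/
private lemma tail_bound (x : ℝ) (hx0 : 0 ≤ x) (hx1 : x ≤ 1) :
    ∀ m : ℕ, 1 - (1 - x) ^ (m + 1) - (m + 1 : ℝ) * x * (1 - x) ^ m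
      ≤ (m + 1 : ℝ) * m / 2 * x ^ 2 := by
  intro m
  induction m with
  | zero => simp
  | succ k ih =>
      have hy : (0:ℝ) ≤ (1 - x) ^ k := pow_nonneg (by linarith) k
      have hy1 : (1 - x) ^ k ≤ 1 := pow_le_one₀ (by linarith) (by linarith)
      have key : 1 - (1 - x) ^ (k + 1 + 1) - ((k:ℝ) + 1 + 1) * x * (1 - x) ^ (k + 1)
          = (1 - (1 - x) ^ (k + 1) - ((k:ℝ) + 1) * x * (1 - x) ^ k)
            + ((k:ℝ) + 1) * x ^ 2 * (1 - x) ^ k := by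
        ring
      push_cast
      push_cast at ih
      rw [key]
      nlinarith [mul_nonneg (by positivity : (0:ℝ) ≤ ((k:ℝ)+1) * x ^ 2) (sub_nonneg.mpr hy1)]

theorem radon_urn_good_range (t n r : ℕ) (ht : 1 ≤ t) (hr1 : 1 ≤ r) (hrn : r ≤ n)
    (ε : ℝ) (hε0 : 0 < ε) (hε4 : ε < 1 / 4)
    (hr : (r : ℝ) ≤ (1 - 2 * ε) * n / t ^ 2) :
    (∑ i ∈ Finset.Icc 2 t, (t.choose i : ℝ) * ((r : ℝ) / n) ^ i * (1 - (r : ℝ) / n) ^ (t - i))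
        * (1 - (r : ℝ) / n)
      ≤ ((1 / 2 - ε) / (1 / 2 + ε)) *
        ((1 - ∑ i ∈ Finset.Icc 2 t,
            (t.choose i : ℝ) * ((r : ℝ) / n) ^ i * (1 - (r : ℝ) / n) ^ (t - i))
          * ((r : ℝ) / n)) := by
  have hn0 : 0 < n := lt_of_lt_of_le hr1 hrn
  have hnR : (0:ℝ) < n := by exact_mod_cast hn0
  set x : ℝ := (r : ℝ) / n with hxdef
  have hx0 : 0 ≤ x := by positivity
  have hx1 : x ≤ 1 := by
    rw [hxdef, div_le_one hnR]; exact_mod_cast hrn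
  set S : ℝ := ∑ i ∈ Finset.Icc 2 t, (t.choose i : ℝ) * x ^ i * (1 - x) ^ (t - i) with hSdef
  have hS0 : 0 ≤ S := by
    apply Finset.sum_nonneg
    intro i _
    exact mul_nonneg (mul_nonneg (by positivity) (pow_nonneg hx0 _))
      (pow_nonneg (by linarith) _)
  -- total sum equals 1
  have htotal : ∑ i ∈ Finset.Ico 0 (t + 1), (t.choose i : ℝ) * x ^ i * (1 - x) ^ (t - i) = 1 := by
    have h := add_pow x (1 - x) t
    simp only [add_sub_cancel, one_pow] at h
    rw [← Finset.range_eq_Ico]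
    rw [Finset.sum_congr rfl (fun i _ => by ring :
      ∀ i ∈ Finset.range (t+1), (t.choose i : ℝ) * x ^ i * (1 - x) ^ (t - i)
        = x ^ i * (1 - x) ^ (t - i) * (t.choose i : ℝ))]
    exact h.symm
  -- split off i = 0, 1
  have hsplit : S = 1 - (1 - x) ^ t - (t : ℝ) * x * (1 - x) ^ (t - 1) := by
    have h02 : (0:ℕ) ≤ 2 := by norm_num
    have h2t : 2 ≤ t + 1 := by omega
    have hIco : Finset.Icc 2 t = Finset.Ico 2 (t + 1) := by
      rw [Finset.Ico_add_one_right_eq_Icc]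
    have hcons := Finset.sum_Ico_consecutive
      (f := fun i => (t.choose i : ℝ) * x ^ i * (1 - x) ^ (t - i)) h02 h2t
    beta_reduce at hcons
    have h01 : ∑ i ∈ Finset.Ico 0 2, (t.choose i : ℝ) * x ^ i * (1 - x) ^ (t - i)
        = (1 - x) ^ t + (t : ℝ) * x * (1 - x) ^ (t - 1) := by
      have he : Finset.Ico 0 2 = ({0, 1} : Finset ℕ) := by decide
      rw [he, Finset.sum_pair (by norm_num)]
      simp only [Nat.choose_zero_right, Nat.choose_one_right, pow_zero, pow_one,
        Nat.cast_one, one_mul, Nat.sub_zero]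
    rw [hSdef, hIco]
    linarith [hcons, htotal, h01]
  -- apply tail bound
  obtain ⟨m, rfl⟩ : ∃ m, t = m + 1 := ⟨t - 1, by omega⟩
  have htail := tail_bound x hx0 hx1 m
  have hSle : S ≤ ((m:ℝ) + 1) * m / 2 * x ^ 2 := by
    rw [hsplit]
    simp only [Nat.add_sub_cancel]
    push_cast
    convert htail using 1
  -- x is small
  have hxsmall : x ≤ (1 - 2 * ε) / ((m:ℝ) + 1) ^ 2 := by
    rw [hxdef, div_le_div_iff₀ hnR (by positivity)]
    have hcast : ((m:ℝ) + 1) ^ 2 = ((m + 1 : ℕ) : ℝ) ^ 2 := by push_cast; ring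
    rw [hcast]
    have h2 : (0:ℝ) < ((m + 1 : ℕ) : ℝ) ^ 2 := by positivity
    calc (r:ℝ) * ((m + 1 : ℕ) : ℝ) ^ 2
        ≤ ((1 - 2 * ε) * n / ((m + 1 : ℕ) : ℝ) ^ 2) * ((m + 1 : ℕ) : ℝ) ^ 2 := by
          apply mul_le_mul_of_nonneg_right _ h2.le
          exact_mod_cast hr
      _ = (1 - 2 * ε) * n := by field_simp
  -- conclude S ≤ (1/2 - ε) x
  have hSx : S ≤ (1 / 2 - ε) * x := by
    have hm0 : (0:ℝ) ≤ (m:ℝ) := Nat.cast_nonneg m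
    have h2 : S ≤ ((m:ℝ) + 1) ^ 2 / 2 * x ^ 2 := le_trans hSle (by nlinarith)
    have h4 : ((m:ℝ) + 1) ^ 2 / 2 * x ≤ (1 - 2 * ε) / 2 := by
      calc ((m:ℝ) + 1) ^ 2 / 2 * x
          ≤ ((m:ℝ) + 1) ^ 2 / 2 * ((1 - 2 * ε) / ((m:ℝ) + 1) ^ 2) :=
            mul_le_mul_of_nonneg_left hxsmall (by positivity)
        _ = (1 - 2 * ε) / 2 := by field_simp
    calc S ≤ (((m:ℝ) + 1) ^ 2 / 2 * x) * x := by nlinarith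
      _ ≤ ((1 - 2 * ε) / 2) * x := mul_le_mul_of_nonneg_right h4 hx0
      _ = (1 / 2 - ε) * x := by ring
  -- final algebra
  have hpos : (0:ℝ) < 1 / 2 + ε := by linarith
  rw [div_mul_eq_mul_div, le_div_iff₀ hpos]
  nlinarith [hSx, hS0, hx0, hx1, mul_nonneg hS0 hx0,
    mul_nonneg hε0.le (mul_nonneg hS0 hx0), mul_nonneg hε0.le hx0]
end

section
/- Consider a biased random walk Y₀, Y₁, … on ℤ where at each step the walk decreases by 1 with probability 1/2 + ε and increases by 1 with probability 1/2 - ε, for ε ∈ (0, 1/4). For any integer I and any δ > 0, with probability at least 1 - δ the walk visits I at most (1/(4ε²)) · ln(1/(4ε²δ)) times. -/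
/-!
Let `t` be the time of the first visit to `I`. Since the steps are `±1`, every later visit
happens at a time `t + 2 j`, so more than `N` visits force a return to `I` at some time `t + 2 i`
with `i ≥ N`. That return depends only on the steps after `t`, hence is independent of the
first-visit event, and a return after exactly `2 i` steps has probability
`C(2i, i) (1/4 - ε²)^i ≤ (1 - 4ε²)^i / 2`. Summing the geometric tail over `i ≥ N` and then over
the disjoint first-visit events gives `(1 - 4ε²)^N / (8ε²)`, which is at most `δ` for
`N = ⌊(1 / (4ε²)) log (1 / (4ε²δ))⌋`.
-/

open MeasureTheory ProbabilityTheory Finset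
open scoped ENNReal

lemma sum_eq_two_mul_card_filter_sub_card {ι : Type*} (f : ι → ℤ) (s : Finset ι)
    (hf : ∀ k ∈ s, f k = -1 ∨ f k = 1) :
    ∑ k ∈ s, f k = 2 * #{k ∈ s | f k = 1} - #s := by
  calc ∑ k ∈ s, f k = ∑ k ∈ s, (2 * (if f k = 1 then 1 else 0) - 1 : ℤ) :=
        sum_congr rfl fun k hk => by rcases hf k hk with h | h <;> simp [h]
    _ = 2 * #{k ∈ s | f k = 1} - #s := by
        rw [sum_sub_distrib, ← mul_sum, sum_boole]; simp

lemma Nat.two_mul_centralBinom_le_four_pow {n : ℕ} (hn : n ≠ 0) :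
    2 * n.centralBinom ≤ 4 ^ n := by
  obtain ⟨m, rfl⟩ := Nat.exists_eq_succ_of_ne_zero hn
  have h : (m + 1).centralBinom = 2 * (2 * m + 1).choose m := by
    rw [Nat.centralBinom_eq_two_mul_choose, show 2 * (m + 1) = 2 * m + 1 + 1 by ring,
      Nat.choose_succ_succ, Nat.choose_symm_half]
    ring
  rw [h, pow_succ]
  linarith [Nat.choose_middle_le_pow m]

section Independence

variable {Ω ι β : Type*} {X : ι → Ω → β}

lemma exists_setOf_eq_preimage_restrict {U : Finset ι} {P : (ι → β) → Prop} (hP : DependsOn P U) :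
    ∃ A : Set (U → β), {ω | P (X · ω)} = (fun ω (k : U) => X k ω) ⁻¹' A := by
  refine ⟨{v | ∃ ω', (fun k : U => X k ω') = v ∧ P (X · ω')}, ?_⟩
  ext ω
  refine ⟨fun h => ⟨ω, rfl, h⟩, fun ⟨ω', hω', h⟩ => ?_⟩
  exact (hP (x := (X · ω')) (y := (X · ω)) fun k hk => congrFun hω' ⟨k, hk⟩).mp h

variable [MeasurableSpace Ω] {μ : Measure Ω} [MeasurableSpace β] [MeasurableSingletonClass β]
  [Countable β]

lemma measurableSet_setOf_of_dependsOn (hmeas : ∀ k, Measurable (X k)) {U : Finset ι}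
    {P : (ι → β) → Prop} (hP : DependsOn P U) : MeasurableSet {ω | P (X · ω)} := by
  obtain ⟨A, hA⟩ := exists_setOf_eq_preimage_restrict (X := X) hP
  rw [hA]
  exact measurable_pi_lambda (fun ω (k : U) => X k ω) (fun k => hmeas k) .of_discrete

lemma measure_inter_eq_mul_of_dependsOn (hX : iIndepFun X μ) (hmeas : ∀ k, Measurable (X k))
    {S T : Finset ι} (hST : Disjoint S T) {P Q : (ι → β) → Prop}
    (hP : DependsOn P S) (hQ : DependsOn Q T) :
    μ ({ω | P (X · ω)} ∩ {ω | Q (X · ω)}) = μ {ω | P (X · ω)} * μ {ω | Q (X · ω)} := by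
  obtain ⟨A, hA⟩ := exists_setOf_eq_preimage_restrict (X := X) hP
  obtain ⟨B, hB⟩ := exists_setOf_eq_preimage_restrict (X := X) hQ
  rw [hA, hB]
  exact (hX.indepFun_finset S T hST hmeas).measure_inter_preimage_eq_mul _ _
    .of_discrete .of_discrete

end Independence

section Binomial

variable {Ω ι β : Type*} [MeasurableSpace Ω] {μ : Measure Ω} [MeasurableSpace β]
  [MeasurableSingletonClass β] [DecidableEq β] {X : ι → Ω → β}

lemma measure_card_filter_eq_le (hX : iIndepFun X μ) (a : β) (T : Finset ι) (j : ℕ)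
    {p q : ℝ≥0∞} (hp : ∀ k, μ {ω | X k ω = a} ≤ p) (hq : ∀ k, μ {ω | X k ω ≠ a} ≤ q) :
    μ {ω | #{k ∈ T | X k ω = a} = j} ≤ (#T).choose j * p ^ j * q ^ (#T - j) := by
  classical
  set pattern : Finset ι → Set Ω := fun s => ⋂ k ∈ T, X k ⁻¹' (if k ∈ s then {a} else {a}ᶜ)
  have hcover : {ω | #{k ∈ T | X k ω = a} = j} ⊆ ⋃ s ∈ T.powersetCard j, pattern s := by
    intro ω hω
    refine Set.mem_iUnion₂.2 ⟨{k ∈ T | X k ω = a}, mem_powersetCard.2 ⟨filter_subset _ _, hω⟩, ?_⟩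
    simp only [pattern, Set.mem_iInter]
    intro k hk
    split_ifs with h <;> simp_all
  have hpattern : ∀ s ∈ T.powersetCard j, μ (pattern s) ≤ p ^ j * q ^ (#T - j) := by
    intro s hs
    obtain ⟨hsT, rfl⟩ := mem_powersetCard.1 hs
    calc μ (pattern s) = ∏ k ∈ T, μ (X k ⁻¹' if k ∈ s then {a} else {a}ᶜ) :=
          hX.measure_inter_preimage_eq_mul T fun k _ => by split_ifs <;> measurability
      _ ≤ ∏ k ∈ T, if k ∈ s then p else q :=
          prod_le_prod' fun k _ => by split_ifs; exacts [hp k, hq k]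
      _ = p ^ #s * q ^ (#T - #s) := by
          rw [prod_ite, prod_const, prod_const, filter_mem_eq_inter, inter_eq_right.2 hsT,
            filter_notMem_eq_sdiff, card_sdiff_of_subset hsT]
  calc μ {ω | #{k ∈ T | X k ω = a} = j}
      ≤ ∑ s ∈ T.powersetCard j, μ (pattern s) :=
        (measure_mono hcover).trans (measure_biUnion_finset_le _ _)
    _ ≤ ∑ s ∈ T.powersetCard j, p ^ j * q ^ (#T - j) := sum_le_sum hpattern
    _ = (#T).choose j * p ^ j * q ^ (#T - j) := by
        rw [sum_const, card_powersetCard, nsmul_eq_mul, mul_assoc]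

end Binomial

lemma eq_add_two_mul_of_sum_Ico_eq_zero {f : ℕ → ℤ} (hf : ∀ k, f k = -1 ∨ f k = 1) {a b : ℕ}
    (hab : a ≤ b) (h : ∑ k ∈ Ico a b, f k = 0) : b = a + 2 * #{k ∈ Ico a b | f k = 1} := by
  have := sum_eq_two_mul_card_filter_sub_card f (Ico a b) fun k _ => hf k
  rw [h, Nat.card_Ico] at this
  omega

lemma exists_sum_Ico_eq_zero_of_forall_mem {f : ℕ → ℤ} (hf : ∀ k, f k = -1 ∨ f k = 1)
    {c : ℤ} {t : ℕ} (ht : ∑ k ∈ range t, f k = c) {S : Finset ℕ}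
    (hS : ∀ n ∈ S, t ≤ n ∧ ∑ k ∈ range n, f k = c) :
    ∃ i, #S ≤ i + 1 ∧ ∑ k ∈ Ico t (t + 2 * i), f k = 0 := by
  rcases S.eq_empty_or_nonempty with rfl | hne
  · exact ⟨0, by simp⟩
  set up : ℕ → ℕ := fun n => #{k ∈ Ico t n | f k = 1}
  have hsum : ∀ n ∈ S, ∑ k ∈ Ico t n, f k = 0 := fun n hn => by
    rw [sum_Ico_eq_sub _ (hS n hn).1, (hS n hn).2, ht, sub_self]
  have heq : ∀ n ∈ S, n = t + 2 * up n := fun n hn =>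
    eq_add_two_mul_of_sum_Ico_eq_zero hf (hS n hn).1 (hsum n hn)
  set b := S.max' hne
  have hsub : S ⊆ (range (up b + 1)).image (t + 2 * ·) := fun n hn => by
    refine mem_image.2 ⟨up n, mem_range_succ_iff.2 ?_, (heq n hn).symm⟩
    exact card_le_card (filter_subset_filter _ (Ico_subset_Ico_right (S.le_max' n hn)))
  refine ⟨up b, ?_, ?_⟩
  · exact (card_le_card hsub).trans (card_image_le.trans (card_range _).le)
  · rw [← heq b (S.max'_mem hne)]
    exact hsum b (S.max'_mem hne)

def FirstHitsAt (c : ℤ) (t : ℕ) (f : ℕ → ℤ) : Prop :=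
  ∑ k ∈ range t, f k = c ∧ ∀ s < t, ∑ k ∈ range s, f k ≠ c

lemma FirstHitsAt.unique {c : ℤ} {s t : ℕ} {f : ℕ → ℤ} (hs : FirstHitsAt c s f)
    (ht : FirstHitsAt c t f) : s = t := by
  rcases lt_trichotomy s t with h | h | h
  · exact absurd hs.1 (ht.2 s h)
  · exact h
  · exact absurd ht.1 (hs.2 t h)

lemma exists_firstHitsAt {c : ℤ} {f : ℕ → ℤ} (h : ∃ n, ∑ k ∈ range n, f k = c) :
    ∃ t, FirstHitsAt c t f ∧ ∀ n, ∑ k ∈ range n, f k = c → t ≤ n := by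
  classical
  exact ⟨Nat.find h, ⟨Nat.find_spec h, fun s => Nat.find_min h⟩, fun n => Nat.find_min' h⟩

lemma dependsOn_firstHitsAt (c : ℤ) (t : ℕ) : DependsOn (FirstHitsAt c t) (range t) := by
  intro f g h
  have hsum : ∀ s ≤ t, ∑ k ∈ range s, f k = ∑ k ∈ range s, g k := fun s hs =>
    sum_congr rfl fun k hk => h k (by simp only [coe_range, Set.mem_Iio, mem_range] at hk ⊢; omega)
  simp only [FirstHitsAt, hsum t le_rfl]
  exact propext (and_congr_right' (forall₂_congr fun s hs => by rw [hsum s hs.le]))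

lemma dependsOn_sum_Ico_eq (a b : ℕ) (c : ℤ) :
    DependsOn (fun f : ℕ → ℤ => ∑ k ∈ Ico a b, f k = c) (Ico a b) := fun f g h => by
  simp only [sum_congr rfl fun k hk => h k hk]

lemma tsum_ofReal_pow_add_div_two {r : ℝ} (h0 : 0 ≤ r) (h1 : r < 1) (N : ℕ) :
    ∑' j, ENNReal.ofReal (r ^ (N + j) / 2) = ENNReal.ofReal (r ^ N / (2 * (1 - r))) := by
  have hsplit : ∀ j, r ^ (N + j) / 2 = r ^ N / 2 * r ^ j := fun j => by rw [pow_add]; ring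
  simp_rw [hsplit]
  rw [← ENNReal.ofReal_tsum_of_nonneg (fun j => by positivity)
    ((summable_geometric_of_lt_one h0 h1).mul_left _), tsum_mul_left,
    tsum_geometric_of_lt_one h0 h1]
  congr 1
  field_simp [(by linarith : 1 - r ≠ 0)]

lemma measure_sum_Ico_eq_zero_le {Ω : Type*} [MeasurableSpace Ω] {μ : Measure Ω}
    {X : ℕ → Ω → ℤ} {ε : ℝ} (hind : iIndepFun X μ)
    (hval : ∀ n ω, X n ω = -1 ∨ X n ω = 1)
    (hdown : ∀ n, μ {ω | X n ω = -1} = ENNReal.ofReal (1 / 2 + ε))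
    (hup : ∀ n, μ {ω | X n ω = 1} = ENNReal.ofReal (1 / 2 - ε)) (hε : |ε| ≤ 1 / 2)
    (t : ℕ) {i : ℕ} (hi : i ≠ 0) :
    μ {ω | ∑ k ∈ Ico t (t + 2 * i), X k ω = 0} ≤ ENNReal.ofReal ((1 - 4 * ε ^ 2) ^ i / 2) := by
  obtain ⟨hε₁, hε₂⟩ := abs_le.1 hε
  have hsub : {ω | ∑ k ∈ Ico t (t + 2 * i), X k ω = 0}
      ⊆ {ω | #{k ∈ Ico t (t + 2 * i) | X k ω = 1} = i} := fun ω hω => by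
    have := sum_eq_two_mul_card_filter_sub_card (X · ω) (Ico t (t + 2 * i)) fun k _ => hval k ω
    rw [Set.mem_ofPred_eq] at hω ⊢
    rw [hω, Nat.card_Ico] at this
    omega
  have hdown' : ∀ k, μ {ω | X k ω ≠ 1} ≤ ENNReal.ofReal (1 / 2 + ε) := fun k => by
    refine (measure_mono fun ω hω => ?_).trans (hdown k).le
    exact (hval k ω).resolve_right hω
  have hC : ((2 * i).choose i : ℝ) / 4 ^ i ≤ 1 / 2 := by
    have : (2 * (2 * i).choose i : ℝ) ≤ 4 ^ i := by
      rw [← Nat.centralBinom_eq_two_mul_choose]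
      exact_mod_cast Nat.two_mul_centralBinom_le_four_pow hi
    rw [div_le_iff₀ (by positivity)]
    linarith
  calc μ {ω | ∑ k ∈ Ico t (t + 2 * i), X k ω = 0}
      ≤ (2 * i).choose i * ENNReal.ofReal (1 / 2 - ε) ^ i * ENNReal.ofReal (1 / 2 + ε) ^ i := by
        simpa [show 2 * i - i = i by omega] using (measure_mono hsub).trans
          (measure_card_filter_eq_le hind 1 _ i (fun k => (hup k).le) hdown')
    _ = ENNReal.ofReal ((2 * i).choose i / 4 ^ i * (1 - 4 * ε ^ 2) ^ i) := by
        rw [← ENNReal.ofReal_pow (by linarith), ← ENNReal.ofReal_pow (by linarith),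
          ← ENNReal.ofReal_natCast, ← ENNReal.ofReal_mul (by positivity),
          ← ENNReal.ofReal_mul (by positivity)]
        congr 1
        rw [mul_assoc, ← mul_pow, show (1 / 2 - ε) * (1 / 2 + ε) = (1 - 4 * ε ^ 2) / 4 by ring,
          div_pow]
        ring
    _ ≤ ENNReal.ofReal (1 / 2 * (1 - 4 * ε ^ 2) ^ i) := by
        have : 0 ≤ 1 - 4 * ε ^ 2 := by nlinarith
        gcongr
    _ = ENNReal.ofReal ((1 - 4 * ε ^ 2) ^ i / 2) := by rw [one_div_mul_eq_div]

theorem measure_exists_visits_gt_le {Ω : Type*} [MeasurableSpace Ω] {μ : Measure Ω}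
    [IsProbabilityMeasure μ] {X : ℕ → Ω → ℤ} {ε : ℝ} (hmeas : ∀ n, Measurable (X n))
    (hval : ∀ n ω, X n ω = -1 ∨ X n ω = 1) (hind : iIndepFun X μ)
    (hdown : ∀ n, μ {ω | X n ω = -1} = ENNReal.ofReal (1 / 2 + ε))
    (hup : ∀ n, μ {ω | X n ω = 1} = ENNReal.ofReal (1 / 2 - ε))
    (hε₀ : 0 < ε) (hε₁ : ε ≤ 1 / 2) (c : ℤ) {N : ℕ} (hN : N ≠ 0) :
    μ {ω | ∃ S : Finset ℕ, N < #S ∧ ∀ n ∈ S, ∑ k ∈ range n, X k ω = c}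
      ≤ ENNReal.ofReal ((1 - 4 * ε ^ 2) ^ N / (2 * (4 * ε ^ 2))) := by
  set F : ℕ → Set Ω := fun t => {ω | FirstHitsAt c t (X · ω)}
  set R : ℕ → ℕ → Set Ω := fun t i => {ω | ∑ k ∈ Ico t (t + 2 * i), X k ω = 0}
  set K := ENNReal.ofReal ((1 - 4 * ε ^ 2) ^ N / (2 * (4 * ε ^ 2)))
  have hcover : {ω | ∃ S : Finset ℕ, N < #S ∧ ∀ n ∈ S, ∑ k ∈ range n, X k ω = c}
      ⊆ ⋃ t, F t ∩ ⋃ j, R t (N + j) := by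
    rintro ω ⟨S, hNS, hS⟩
    obtain ⟨n, hn⟩ := card_pos.1 (by omega : 0 < #S)
    obtain ⟨t, ht, hmin⟩ := exists_firstHitsAt ⟨n, hS n hn⟩
    obtain ⟨i, hSi, hi⟩ := exists_sum_Ico_eq_zero_of_forall_mem (hval · ω) ht.1
      fun n hn => ⟨hmin n (hS n hn), hS n hn⟩
    refine Set.mem_iUnion.2 ⟨t, ht, Set.mem_iUnion.2 ⟨i - N, ?_⟩⟩
    rwa [show N + (i - N) = i by omega]
  have hF_disj : Pairwise (Function.onFun Disjoint F) := fun s t hst =>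
    Set.disjoint_left.2 fun ω hs ht => hst (hs.unique ht)
  have hF_meas : ∀ t, MeasurableSet (F t) := fun t =>
    measurableSet_setOf_of_dependsOn hmeas (dependsOn_firstHitsAt c t)
  have hreturn : ∀ t, μ (F t ∩ ⋃ j, R t (N + j)) ≤ μ (F t) * K := fun t => calc
    μ (F t ∩ ⋃ j, R t (N + j)) ≤ ∑' j, μ (F t ∩ R t (N + j)) := by
        rw [Set.inter_iUnion]; exact measure_iUnion_le _
    _ = ∑' j, μ (F t) * μ (R t (N + j)) := tsum_congr fun j =>
        measure_inter_eq_mul_of_dependsOn hind hmeas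
          (disjoint_left.2 fun k hk hk' => by simp only [mem_range, mem_Ico] at hk hk'; omega)
          (dependsOn_firstHitsAt c t) (dependsOn_sum_Ico_eq _ _ _)
    _ ≤ ∑' j, μ (F t) * ENNReal.ofReal ((1 - 4 * ε ^ 2) ^ (N + j) / 2) :=
        ENNReal.tsum_le_tsum fun j => mul_le_mul_right
          (measure_sum_Ico_eq_zero_le hind hval hdown hup (abs_le.2 ⟨by linarith, hε₁⟩) t
            (by omega)) _
    _ = μ (F t) * K := by
        rw [ENNReal.tsum_mul_left, tsum_ofReal_pow_add_div_two (by nlinarith) (by nlinarith),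
          sub_sub_cancel]
  calc μ {ω | ∃ S : Finset ℕ, N < #S ∧ ∀ n ∈ S, ∑ k ∈ range n, X k ω = c}
      ≤ ∑' t, μ (F t ∩ ⋃ j, R t (N + j)) := (measure_mono hcover).trans (measure_iUnion_le _)
    _ ≤ ∑' t, μ (F t) * K := ENNReal.tsum_le_tsum hreturn
    _ = μ (⋃ t, F t) * K := by rw [ENNReal.tsum_mul_right, measure_iUnion hF_disj hF_meas]
    _ ≤ K := mul_le_of_le_one_left' prob_le_one

lemma one_le_inv_mul_log {x δ : ℝ} (hx₀ : 0 < x) (hx₁ : x ≤ 1 / 2) (hδ₀ : 0 < δ) (hδ₁ : δ < 1) :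
    1 ≤ 1 / x * Real.log (1 / (x * δ)) := by
  have hlog := Real.one_sub_inv_le_log_of_pos (by positivity : 0 < 1 / (x * δ))
  simp only [one_div, inv_inv] at hlog ⊢
  rw [le_inv_mul_iff₀ hx₀]
  nlinarith

lemma pow_floor_div_le {x δ : ℝ} (hx₀ : 0 < x) (hx₁ : x ≤ 1 / 2) (hδ : 0 < δ) :
    (1 - x) ^ ⌊1 / x * Real.log (1 / (x * δ))⌋₊ / (2 * x) ≤ δ := by
  set L := 1 / x * Real.log (1 / (x * δ))
  have hxL : Real.exp (-(x * L)) = x * δ := by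
    rw [show x * L = Real.log (1 / (x * δ)) by simp only [L]; field_simp, one_div,
      Real.log_inv, neg_neg, Real.exp_log (by positivity)]
  have hexp : Real.exp x ≤ 2 := calc
    Real.exp x = (Real.exp (-x))⁻¹ := by rw [Real.exp_neg, inv_inv]
    _ ≤ (1 - x)⁻¹ := inv_anti₀ (by linarith) (Real.one_sub_le_exp_neg x)
    _ ≤ 2 := by rw [inv_le_comm₀ (by linarith) (by norm_num)]; linarith
  have hfloor : L - 1 < ⌊L⌋₊ := Nat.sub_one_lt_floor L
  have hpow : (1 - x) ^ ⌊L⌋₊ ≤ 2 * x * δ := calc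
    (1 - x) ^ ⌊L⌋₊ ≤ Real.exp (-x) ^ ⌊L⌋₊ :=
        pow_le_pow_left₀ (by linarith) (Real.one_sub_le_exp_neg x) _
    _ = Real.exp (-(x * L)) * Real.exp (x * (L - ⌊L⌋₊)) := by
        rw [← Real.exp_nat_mul, ← Real.exp_add]; ring_nf
    _ ≤ x * δ * Real.exp x := by
        rw [hxL]; gcongr; nlinarith
    _ ≤ 2 * x * δ := by nlinarith [mul_pos hx₀ hδ]
  rw [div_le_iff₀ (by positivity)]
  linarith

theorem biased_walk_visits (Ω : Type*) [MeasurableSpace Ω] (μ : Measure Ω)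
    [IsProbabilityMeasure μ] (ε δ : ℝ) (hε0 : 0 < ε) (hε4 : ε < 1 / 4) (hδ : 0 < δ)
    (steps : ℕ → Ω → ℤ) (hmeas : ∀ n, Measurable (steps n))
    (hval : ∀ n ω, steps n ω = -1 ∨ steps n ω = 1)
    (hind : iIndepFun steps μ)
    (hdown : ∀ n, μ {ω | steps n ω = -1} = ENNReal.ofReal (1 / 2 + ε))
    (hup : ∀ n, μ {ω | steps n ω = 1} = ENNReal.ofReal (1 / 2 - ε))
    (Y₀ I : ℤ) :
    μ {ω | ∃ S : Finset ℕ,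
        (1 / (4 * ε ^ 2)) * Real.log (1 / (4 * ε ^ 2 * δ)) < (S.card : ℝ) ∧
        ∀ n ∈ S, Y₀ + ∑ k ∈ Finset.range n, steps k ω = I} ≤ ENNReal.ofReal δ := by
  rcases le_or_gt 1 δ with hδ₁ | hδ₁
  · exact prob_le_one.trans (ENNReal.ofReal_one ▸ ENNReal.ofReal_le_ofReal hδ₁)
  have hx₀ : 0 < 4 * ε ^ 2 := by positivity
  have hx₁ : 4 * ε ^ 2 ≤ 1 / 2 := by nlinarith
  set L := 1 / (4 * ε ^ 2) * Real.log (1 / (4 * ε ^ 2 * δ))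
  have hL : 1 ≤ L := one_le_inv_mul_log hx₀ hx₁ hδ hδ₁
  calc μ {ω | ∃ S : Finset ℕ, L < (S.card : ℝ) ∧ ∀ n ∈ S, Y₀ + ∑ k ∈ range n, steps k ω = I}
      ≤ μ {ω | ∃ S : Finset ℕ, ⌊L⌋₊ < #S ∧ ∀ n ∈ S, ∑ k ∈ range n, steps k ω = I - Y₀} :=
        measure_mono fun ω ⟨S, hLS, hS⟩ =>
          ⟨S, (Nat.floor_lt (by linarith)).2 hLS, fun n hn => by linarith [hS n hn]⟩
    _ ≤ ENNReal.ofReal ((1 - 4 * ε ^ 2) ^ ⌊L⌋₊ / (2 * (4 * ε ^ 2))) :=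
        measure_exists_visits_gt_le hmeas hval hind hdown hup hε0 (by linarith) (I - Y₀)
          (Nat.floor_pos.2 hL).ne'
    _ ≤ ENNReal.ofReal δ := ENNReal.ofReal_le_ofReal (pow_floor_div_le hx₀ hx₁ hδ)
end
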